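/- If a finite simple graph G is a q-manifold, then its Barycentric refinement (the finite simple graph whose vertices are the nonempty cliques of G, with two cliques adjacent if and only if one is strictly contained in the other) is also a q-manifold. -/

import Mathlib

universe u

/-- The unit sphere of a vertex: the subgraph induced on the neighbors of `v`. -/
def SimpleGraph.unitSphere {V : Type u} (G : SimpleGraph V) (v : V) :
    SimpleGraph {u : V // G.Adj v u} :=
  SimpleGraph.induce {u : V | G.Adj v u} G

/-- The graph obtained by deleting the vertex `v`. -/
def SimpleGraph.deleteVert {V : Type u} (G : SimpleGraph V) (v : V) :
    SimpleGraph {u : V // u ≠ v} :=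
  SimpleGraph.induce {u : V | u ≠ v} G

/-- Inductive notion of contractibility for graphs: the one-vertex graph is
contractible, and `G` is contractible if for some vertex `v` both the unit sphere
`S(v)` and the deletion `G ∖ v` are contractible. -/
inductive GraphContractible : ∀ {V : Type u}, SimpleGraph V → Prop
  | single {V : Type u} (G : SimpleGraph V) (h1 : Nonempty V) (h2 : Subsingleton V) :
      GraphContractible G
  | step {V : Type u} (G : SimpleGraph V) (v : V)
      (hS : GraphContractible (G.unitSphere v))
      (hD : GraphContractible (G.deleteVert v)) : GraphContractible G

/-- Inductive notion of a `q`-sphere: the empty graph is the `(-1)`-sphere, and for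
`q ≥ 0` a graph is a `q`-sphere if every unit sphere is a `(q-1)`-sphere and deleting
some vertex leaves a contractible graph. -/
inductive GraphSphere : ℤ → ∀ {V : Type u}, SimpleGraph V → Prop
  | empty {V : Type u} (G : SimpleGraph V) (h : IsEmpty V) : GraphSphere (-1) G
  | succ {V : Type u} (G : SimpleGraph V) (q : ℤ) (hq : 0 ≤ q)
      (hS : ∀ v : V, GraphSphere (q - 1) (G.unitSphere v))
      (hv : ∃ v : V, GraphContractible (G.deleteVert v)) : GraphSphere q G

/-- A graph is a `q`-manifold if every unit sphere is a `(q-1)`-sphere. -/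
def IsGraphManifold (q : ℤ) {V : Type u} (G : SimpleGraph V) : Prop :=
  ∀ v : V, GraphSphere (q - 1) (G.unitSphere v)

/-- The join of two graphs: keep all edges and connect every vertex of `G` to every
vertex of `H`. -/
def graphJoin {V W : Type u} (G : SimpleGraph V) (H : SimpleGraph W) :
    SimpleGraph (V ⊕ W) where
  Adj x y := match x, y with
    | Sum.inl a, Sum.inl b => G.Adj a b
    | Sum.inr a, Sum.inr b => H.Adj a b
    | Sum.inl _, Sum.inr _ => True
    | Sum.inr _, Sum.inl _ => True
  symm := ⟨by rintro (a | a) (b | b) h <;> simp_all [SimpleGraph.adj_comm]⟩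
  loopless := ⟨by rintro (a | a) h <;> first | exact SimpleGraph.irrefl _ h | exact h.ne rfl⟩

open Classical in
/-- `f_k(G)`: the number of cliques of `G` with exactly `k+1` vertices. -/
noncomputable def graphFVec {V : Type u} [Fintype V] (G : SimpleGraph V) (k : ℕ) : ℕ :=
  (Finset.univ.filter fun x : Finset V => x.card = k + 1 ∧ G.IsClique (↑x : Set V)).card

/-- The Euler characteristic `χ(G) = Σ_k (-1)^k f_k(G)`. -/
noncomputable def graphEulerChar {V : Type u} [Fintype V] (G : SimpleGraph V) : ℤ :=
  ∑ k ∈ Finset.range (Fintype.card V + 1), (-1 : ℤ) ^ k * graphFVec G k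

open Classical in
/-- The curvature of a vertex: `K(v) = Σ_{x ∋ v} (-1)^(|x|-1)/|x|`, summing over the
cliques of `G` containing `v`. -/
noncomputable def graphCurvature {V : Type u} [Fintype V] (G : SimpleGraph V) (v : V) : ℚ :=
  ∑ x ∈ Finset.univ.filter
      (fun x : Finset V => x.Nonempty ∧ G.IsClique (↑x : Set V) ∧ v ∈ x),
    (-1 : ℚ) ^ (x.card - 1) / (x.card : ℚ)

/-!
The vertices of the refinement are the nonempty cliques of `G`, and the unit sphere of a clique `x`
is the join of the part below `x`, the refined boundary of the simplex `x` (a `(|x| - 2)`-sphere),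
with the part above `x`. Cliques of `G` through a vertex `v` correspond to cliques of `S(v)` by
removing `v`, so for `v ∈ x` the part above `x` is a part above a smaller clique in the
`(q - 1)`-sphere `S(v)`; induction along the definition of spheres makes it a `(q - |x|)`-sphere.
A join of a `p`-sphere and an `r`-sphere is a `(p + r + 1)`-sphere, so every unit sphere of the
refinement is a `(q - 1)`-sphere. The contractible deletions needed along the way come from
removing the cliques through a vertex one at a time, each along a contractible unit sphere.
-/

universe v

namespace SimpleGraph

variable {V : Type u} {W : Type v} {G : SimpleGraph V} {H : SimpleGraph W}

def Iso.unitSphere (e : G ≃g H) (x : V) : G.unitSphere x ≃g H.unitSphere (e x) where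
  toEquiv := e.toEquiv.subtypeEquiv fun _ => e.map_adj_iff.symm
  map_rel_iff' := e.map_adj_iff

def Iso.deleteVert (e : G ≃g H) (x : V) : G.deleteVert x ≃g H.deleteVert (e x) where
  toEquiv := e.toEquiv.subtypeEquiv fun _ => e.injective.ne_iff.symm
  map_rel_iff' := e.map_adj_iff

end SimpleGraph

section Invariance

variable {V : Type u} {W : Type v} {G : SimpleGraph V} {H : SimpleGraph W}

theorem GraphContractible.of_iso (e : G ≃g H) (h : GraphContractible G) :
    GraphContractible H := by
  induction h generalizing W with
  | single G hne hsub => exact .single H (hne.map e) e.toEquiv.symm.subsingleton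
  | step G v _ _ ihS ihD => exact .step H (e v) (ihS (e.unitSphere v)) (ihD (e.deleteVert v))

theorem GraphSphere.of_iso {q : ℤ} (e : G ≃g H) (h : GraphSphere q G) : GraphSphere q H := by
  induction h generalizing W with
  | empty G _ => exact .empty H e.toEquiv.symm.isEmpty
  | succ G q hq _ hv ihS =>
    refine .succ H q hq (fun w => ?_) ?_
    · have := ihS (e.symm w) (e.unitSphere (e.symm w))
      rwa [e.apply_symm_apply] at this
    · obtain ⟨v, hv⟩ := hv
      exact ⟨e v, hv.of_iso (e.deleteVert v)⟩

theorem GraphContractible.finite (h : GraphContractible G) : Finite V := by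
  induction h with
  | single _ _ hsub => infer_instance
  | step _ v _ _ _ ih => classical exact .of_equiv _ (Equiv.optionSubtypeNe v)

theorem GraphSphere.finite {q : ℤ} (h : GraphSphere q G) : Finite V := by
  cases h with
  | empty _ _ => infer_instance
  | succ _ _ _ _ hv =>
    obtain ⟨v, hv⟩ := hv
    have := hv.finite
    classical exact .of_equiv _ (Equiv.optionSubtypeNe v)

end Invariance

theorem GraphContractible.of_forall_adj {V : Type u} [Finite V] {G : SimpleGraph V} (v : V)
    (hv : ∀ u, u ≠ v → G.Adj v u) : GraphContractible G := by
  induction h : Nat.card V using Nat.strong_induction_on generalizing V with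
  | _ n ih =>
    by_cases hsub : Subsingleton V
    · exact .single G ⟨v⟩ hsub
    obtain ⟨u, hu⟩ : ∃ u, u ≠ v := by
      by_contra! hall
      exact hsub ⟨fun a b => (hall a).trans (hall b).symm⟩
    refine .step G u ?_ ?_
    · exact ih _ (h ▸ Finite.card_subtype_lt (G.irrefl (v := u))) (G := G.unitSphere u)
        ⟨v, (hv u hu).symm⟩ (fun w hw => hv w.1 fun h => hw (Subtype.ext h)) rfl
    · exact ih _ (h ▸ Finite.card_subtype_lt (x := u) (by simp)) (G := G.deleteVert u)
        ⟨v, hu.symm⟩ (fun w hw => hv w.1 fun h => hw (Subtype.ext h)) rfl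

section Join

def graphJoinCongr {V W V' W' : Type u} {G : SimpleGraph V} {H : SimpleGraph W}
    {G' : SimpleGraph V'} {H' : SimpleGraph W'}
    (e : G ≃g G') (f : H ≃g H') : graphJoin G H ≃g graphJoin G' H' where
  toEquiv := e.toEquiv.sumCongr f.toEquiv
  map_rel_iff' := by
    rintro (a | b) (a' | b')
    exacts [e.map_adj_iff, Iff.rfl, Iff.rfl, f.map_adj_iff]

variable {V W : Type u} (G : SimpleGraph V) (H : SimpleGraph W)

def graphJoinUnitSphereInl (v : V) :
    (graphJoin G H).unitSphere (.inl v) ≃g graphJoin (G.unitSphere v) H where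
  toFun
    | ⟨.inl a, h⟩ => .inl ⟨a, h⟩
    | ⟨.inr b, _⟩ => .inr b
  invFun
    | .inl a => ⟨.inl a.1, a.2⟩
    | .inr b => ⟨.inr b, trivial⟩
  left_inv := by rintro ⟨a | b, h⟩ <;> rfl
  right_inv := by rintro (a | b) <;> rfl
  map_rel_iff' := by rintro ⟨a | b, _⟩ ⟨a' | b', _⟩ <;> exact Iff.rfl

def graphJoinUnitSphereInr (w : W) :
    (graphJoin G H).unitSphere (.inr w) ≃g graphJoin G (H.unitSphere w) where
  toFun
    | ⟨.inl a, _⟩ => .inl a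
    | ⟨.inr b, h⟩ => .inr ⟨b, h⟩
  invFun
    | .inl a => ⟨.inl a, trivial⟩
    | .inr b => ⟨.inr b.1, b.2⟩
  left_inv := by rintro ⟨a | b, h⟩ <;> rfl
  right_inv := by rintro (a | b) <;> rfl
  map_rel_iff' := by rintro ⟨a | b, _⟩ ⟨a' | b', _⟩ <;> exact Iff.rfl

def graphJoinDeleteVertInl (v : V) :
    (graphJoin G H).deleteVert (.inl v) ≃g graphJoin (G.deleteVert v) H where
  toFun
    | ⟨.inl a, h⟩ => .inl ⟨a, fun e => h (congrArg Sum.inl e)⟩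
    | ⟨.inr b, _⟩ => .inr b
  invFun
    | .inl a => ⟨.inl a.1, fun e => a.2 (Sum.inl_injective e)⟩
    | .inr b => ⟨.inr b, Sum.inr_ne_inl⟩
  left_inv := by rintro ⟨a | b, h⟩ <;> rfl
  right_inv := by rintro (a | b) <;> rfl
  map_rel_iff' := by rintro ⟨a | b, _⟩ ⟨a' | b', _⟩ <;> exact Iff.rfl

def graphJoinOfIsEmptyLeft [IsEmpty V] : graphJoin G H ≃g H where
  toEquiv := Equiv.emptySum V W
  map_rel_iff' := by rintro (a | b) (a' | b') <;> first | exact Iff.rfl | exact isEmptyElim ‹V›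

def graphJoinOfIsEmptyRight [IsEmpty W] : graphJoin G H ≃g G where
  toEquiv := Equiv.sumEmpty V W
  map_rel_iff' := by rintro (a | b) (a' | b') <;> first | exact Iff.rfl | exact isEmptyElim ‹W›

variable {G}

theorem GraphContractible.graphJoin_left [Finite W] (hG : GraphContractible G) :
    GraphContractible (graphJoin G H) := by
  induction hG with
  | single G hne hsub =>
    obtain ⟨v⟩ := hne
    refine .of_forall_adj (.inl v) ?_
    rintro (a | b) hab
    · exact absurd (congrArg Sum.inl (Subsingleton.elim a v)) hab
    · trivial
  | step G v _ _ ihS ihD =>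
    exact .step _ (.inl v) (ihS.of_iso (graphJoinUnitSphereInl G H v).symm)
      (ihD.of_iso (graphJoinDeleteVertInl G H v).symm)

variable {H}

theorem GraphSphere.graphJoin {p q : ℤ} (hG : GraphSphere p G) (hH : GraphSphere q H) :
    GraphSphere (p + q + 1) (graphJoin G H) := by
  induction hG generalizing W q with
  | empty G _ =>
    rw [show -1 + q + 1 = q by ring]
    exact hH.of_iso (graphJoinOfIsEmptyLeft G H).symm
  | succ G p hp hSG hvG ihG =>
    induction hH with
    | empty H _ =>
      rw [show p + -1 + 1 = p by ring]
      exact (GraphSphere.succ G p hp hSG hvG).of_iso (graphJoinOfIsEmptyRight G H).symm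
    | succ H q hq hSH hvH ihH =>
      have hH : GraphSphere q H := .succ H q hq hSH hvH
      refine .succ _ _ (by omega) ?_ ?_
      · rintro (a | b)
        · have := ihG a hH
          rw [show p - 1 + q + 1 = p + q + 1 - 1 by ring] at this
          exact this.of_iso (graphJoinUnitSphereInl G H a).symm
        · have := ihH b
          rw [show p + (q - 1) + 1 = p + q + 1 - 1 by ring] at this
          exact this.of_iso (graphJoinUnitSphereInr G H b).symm
      · obtain ⟨v, hv⟩ := hvG
        have := hH.finite
        exact ⟨.inl v, (hv.graphJoin_left H).of_iso (graphJoinDeleteVertInl G H v).symm⟩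

end Join

section InclusionGraph

variable {V : Type u}

def inclusionGraph (P : Finset V → Prop) : SimpleGraph {z : Finset V // P z} where
  Adj x y := x.1 ⊂ y.1 ∨ y.1 ⊂ x.1
  symm := ⟨fun _ _ => Or.symm⟩
  loopless := ⟨fun _ h => h.elim (ssubset_irrefl _) (ssubset_irrefl _)⟩

theorem fromRel_ssubset_eq_inclusionGraph (P : Finset V → Prop) :
    SimpleGraph.fromRel (fun x y : {z // P z} => x.1 ⊂ y.1) = inclusionGraph P := by
  ext x y
  exact (SimpleGraph.fromRel_adj _ x y).trans
    (and_iff_right_of_imp (inclusionGraph P).ne_of_adj)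

def inclusionGraphCongr {P Q : Finset V → Prop} (h : ∀ z, P z ↔ Q z) :
    inclusionGraph P ≃g inclusionGraph Q where
  toEquiv := Equiv.subtypeEquivRight h
  map_rel_iff' := Iff.rfl

noncomputable def inclusionGraphIso {W : Type v} {P : Finset V → Prop} {Q : Finset W → Prop}
    (f : Finset V → Finset W) (hf : ∀ a b, P a → P b → (f a ⊆ f b ↔ a ⊆ b))
    (hP : ∀ a, P a → Q (f a)) (hQ : ∀ b, Q b → ∃ a, P a ∧ f a = b) :
    inclusionGraph P ≃g inclusionGraph Q := by
  have hlt : ∀ a b : {z // P z}, f a.1 ⊂ f b.1 ↔ a.1 ⊂ b.1 := fun a b => by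
    simp only [ssubset_iff_subset_not_subset, hf a.1 b.1 a.2 b.2, hf b.1 a.1 b.2 a.2]
  refine ⟨Equiv.ofBijective (fun a => ⟨f a.1, hP a.1 a.2⟩) ⟨fun a b hab => ?_, fun b => ?_⟩,
    fun {a b} => or_congr (hlt a b) (hlt b a)⟩
  · have hab : f a.1 = f b.1 := congrArg Subtype.val hab
    exact Subtype.ext (subset_antisymm ((hf _ _ a.2 b.2).1 hab.le) ((hf _ _ b.2 a.2).1 hab.ge))
  · obtain ⟨a, ha, hab⟩ := hQ b.1 b.2
    exact ⟨⟨a, ha⟩, Subtype.ext hab⟩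

noncomputable def inclusionGraphUnitSphereIso (P : Finset V → Prop) (x : {z : Finset V // P z}) :
    (inclusionGraph P).unitSphere x ≃g
      graphJoin (inclusionGraph fun z => P z ∧ z ⊂ x.1)
        (inclusionGraph fun z => P z ∧ x.1 ⊂ z) := by
  classical
  refine
    { toFun := fun y => if h : y.1.1 ⊂ x.1 then .inl ⟨y.1.1, y.1.2, h⟩
        else .inr ⟨y.1.1, y.1.2, y.2.resolve_right h⟩
      invFun
        | .inl z => ⟨⟨z.1, z.2.1⟩, .inr z.2.2⟩
        | .inr z => ⟨⟨z.1, z.2.1⟩, .inl z.2.2⟩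
      left_inv := ?_, right_inv := ?_, map_rel_iff' := ?_ }
  · rintro ⟨⟨z, hz⟩, hadj⟩
    by_cases h : z ⊂ x.1 <;> simp [h]
  · rintro (⟨z, hz, h⟩ | ⟨z, hz, h⟩)
    · simp [h]
    · simp [ssubset_asymm h]
  · rintro ⟨⟨a, ha⟩, hxa⟩ ⟨⟨b, hb⟩, hxb⟩
    by_cases h₁ : a ⊂ x.1 <;> by_cases h₂ : b ⊂ x.1 <;>
      simp only [Equiv.coe_fn_mk, h₁, h₂, dite_true, dite_false]
    · rfl
    · exact iff_of_true trivial (.inl (h₁.trans (hxb.resolve_right h₂)))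
    · exact iff_of_true trivial (.inr (h₂.trans (hxa.resolve_right h₁)))
    · rfl

def inclusionGraphDeleteVertIso (P : Finset V → Prop) (x : {z : Finset V // P z}) :
    (inclusionGraph P).deleteVert x ≃g inclusionGraph fun z => P z ∧ z ≠ x.1 where
  toFun y := ⟨y.1.1, y.1.2, fun h => y.2 (Subtype.ext h)⟩
  invFun z := ⟨⟨z.1, z.2.1⟩, fun h => z.2.2 (congrArg Subtype.val h)⟩
  left_inv _ := rfl
  right_inv _ := rfl
  map_rel_iff' := Iff.rfl

theorem finite_subtype_of_forall_subset {P : Finset V → Prop} (s : Finset V)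
    (h : ∀ z, P z → z ⊆ s) : Finite {z // P z} :=
  ((s.powerset : Set (Finset V)).toFinite.subset fun z hz =>
    Finset.mem_coe.2 (Finset.mem_powerset.2 (h z hz))).to_subtype

theorem GraphContractible.inclusionGraph_of_isGreatest {P : Finset V → Prop} {m : Finset V}
    (hm : IsGreatest {z | P z} m) : GraphContractible (inclusionGraph P) := by
  have := finite_subtype_of_forall_subset (P := P) m fun z hz => hm.2 hz
  exact .of_forall_adj ⟨m, hm.1⟩ fun z hz =>
    .inr (Finset.ssubset_iff_subset_ne.2 ⟨hm.2 z.2, fun h => hz (Subtype.ext h)⟩)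

end InclusionGraph

section Peeling

variable {V : Type u}

/-- The vertices in `R` are deleted one at a time, each with a contractible unit sphere (the join
of its lower and upper parts); `Good` is an invariant of the set `T ⊆ R` of those still present. -/
theorem GraphContractible.inclusionGraph_of_peel [DecidableEq V] {P : Finset V → Prop}
    (R : Finset (Finset V)) (hRP : ∀ w ∈ R, P w) (Good : Finset (Finset V) → Prop) (hR : Good R)
    (hbase : GraphContractible (inclusionGraph fun z => P z ∧ z ∉ R))
    (hstep : ∀ T ⊆ R, Good T → T.Nonempty → ∃ w ∈ T, Good (T.erase w) ∧
      GraphContractible (graphJoin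
        (inclusionGraph fun z => (P z ∧ (z ∈ R → z ∈ T)) ∧ z ⊂ w)
        (inclusionGraph fun z => (P z ∧ (z ∈ R → z ∈ T)) ∧ w ⊂ z))) :
    GraphContractible (inclusionGraph P) := by
  suffices key : ∀ T ⊆ R, Good T →
      GraphContractible (inclusionGraph fun z => P z ∧ (z ∈ R → z ∈ T)) from
    (key R subset_rfl hR).of_iso (inclusionGraphCongr fun z => by simp)
  intro T
  induction T using Finset.strongInduction with
  | H T ih =>
    intro hTR hT
    rcases T.eq_empty_or_nonempty with rfl | hne
    · exact hbase.of_iso (inclusionGraphCongr fun z => by simp)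
    obtain ⟨w, hwT, hgood, hsphere⟩ := hstep T hTR hT hne
    refine .step _ ⟨w, hRP w (hTR hwT), fun _ => hwT⟩
      (hsphere.of_iso (inclusionGraphUnitSphereIso _ _).symm) ?_
    refine (ih _ (Finset.erase_ssubset hwT) ((Finset.erase_subset _ _).trans hTR) hgood).of_iso
      ((inclusionGraphDeleteVertIso _ _).trans (inclusionGraphCongr fun z => ?_)).symm
    constructor
    · rintro ⟨⟨hz, hzT⟩, hzw⟩
      exact ⟨hz, fun hzR => Finset.mem_erase.2 ⟨hzw, hzT hzR⟩⟩
    · rintro ⟨hz, hzT⟩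
      exact ⟨⟨hz, fun hzR => Finset.mem_of_mem_erase (hzT hzR)⟩,
        fun h => by subst h; simpa using hzT (hTR hwT)⟩

end Peeling

section SimplexBoundary

variable {V : Type u}

abbrev simplexBoundary (s : Finset V) : SimpleGraph {z : Finset V // z.Nonempty ∧ z ⊂ s} :=
  inclusionGraph fun z => z.Nonempty ∧ z ⊂ s

theorem GraphContractible.inclusionGraph_ssubset_ne_singleton {s : Finset V} {a : V}
    (ha : a ∈ s) (hs : s ≠ {a}) :
    GraphContractible (inclusionGraph fun z => z.Nonempty ∧ z ⊂ s ∧ z ≠ {a}) := by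
  classical
  set P : Finset V → Prop := fun z => z.Nonempty ∧ z ⊂ s ∧ z ≠ {a}
  set R := s.powerset.filter fun z => P z ∧ a ∈ z
  have hR : ∀ z, z ∈ R ↔ P z ∧ a ∈ z := fun z => by
    simpa [R] using fun (hz : P z) _ => hz.2.1.subset
  -- sets containing `a` are removed by increasing size, so the sets still present form an upset
  refine .inclusionGraph_of_peel R (fun w hw => ((hR w).1 hw).1)
    (fun T => ∀ w ∈ T, ∀ w' ∈ R, w ⊆ w' → w' ∈ T) (fun _ _ w' hw' _ => hw') ?_ ?_
  · have hsa : a ∉ s.erase a := Finset.notMem_erase a s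
    refine .inclusionGraph_of_isGreatest ⟨⟨⟨?_, Finset.erase_ssubset ha, ?_⟩, ?_⟩, ?_⟩
    · exact ((Finset.nontrivial_iff_ne_singleton ha).2 hs).erase_nonempty
    · rintro h; exact hsa (h ▸ Finset.mem_singleton_self a)
    · exact fun h => hsa ((hR _).1 h).2
    · rintro z ⟨hz, hzR⟩
      exact Finset.subset_erase.2 ⟨hz.2.1.subset, fun haz => hzR ((hR z).2 ⟨hz, haz⟩)⟩
  · intro T hTR hT hne
    obtain ⟨w, hwT, hwmin⟩ := T.exists_min_image Finset.card hne
    obtain ⟨⟨-, hws, hwa⟩, haw⟩ := (hR w).1 (hTR hwT)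
    refine ⟨w, hwT, fun w₁ hw₁ w' hw' hw₁w' => Finset.mem_erase.2 ⟨?_, hT w₁
      (Finset.mem_of_mem_erase hw₁) w' hw' hw₁w'⟩, ?_⟩
    · rintro rfl
      exact Finset.ne_of_mem_erase hw₁ (Finset.eq_of_subset_of_card_le hw₁w'
        (hwmin w₁ (Finset.mem_of_mem_erase hw₁)))
    have hwa' : a ∉ w.erase a := Finset.notMem_erase a w
    have : Finite {z // (P z ∧ (z ∈ R → z ∈ T)) ∧ w ⊂ z} :=
      finite_subtype_of_forall_subset s fun z hz => hz.1.1.2.1.subset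
    refine .graphJoin_left _
      (.inclusionGraph_of_isGreatest (m := w.erase a) ⟨⟨⟨⟨?_, ?_, ?_⟩, ?_⟩, ?_⟩, ?_⟩)
    · exact ((Finset.nontrivial_iff_ne_singleton haw).2 hwa).erase_nonempty
    · exact (Finset.erase_subset a w).trans_ssubset hws
    · rintro h; exact hwa' (h ▸ Finset.mem_singleton_self a)
    · exact fun h => absurd ((hR _).1 h).2 hwa'
    · exact Finset.erase_ssubset haw
    · rintro z ⟨⟨hz, hzT⟩, hzw⟩
      refine Finset.subset_erase.2 ⟨hzw.subset, fun haz => ?_⟩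
      exact (Finset.card_lt_card hzw).not_ge (hwmin z (hzT ((hR z).2 ⟨hz, haz⟩)))

instance (a : V) : IsEmpty {z : Finset V // z.Nonempty ∧ z ⊂ {a}} :=
  ⟨fun ⟨_, hz, hza⟩ => hz.ne_empty (Finset.ssubset_singleton_iff.1 hza)⟩

noncomputable def simplexBoundarySdiffIso [DecidableEq V] {s y : Finset V} (hys : y ⊆ s) :
    simplexBoundary (s \ y) ≃g inclusionGraph fun z => (z.Nonempty ∧ z ⊂ s) ∧ y ⊂ z := by
  have hy : ∀ a, a ⊂ s \ y → ∀ x ∈ a, x ∉ y := fun a ha x hx =>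
    (Finset.mem_sdiff.1 (ha.subset hx)).2
  refine inclusionGraphIso (y ∪ ·)
    (fun a b ha _ => ⟨fun h x hx => ?_, Finset.union_subset_union subset_rfl⟩)
    (fun a ha => ⟨⟨ha.1.mono Finset.subset_union_right, sup_lt_of_lt_sdiff_left ha.2 hys⟩, ?_⟩)
    (fun b hb => ⟨b \ y, ⟨Finset.sdiff_nonempty.2 hb.2.not_subset,
      sdiff_lt_sdiff_right hb.1.2 hb.2.subset⟩, Finset.union_sdiff_of_subset hb.2.subset⟩)
  · exact (Finset.mem_union.1 (h (Finset.mem_union_right y hx))).resolve_left (hy a ha.2 x hx)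
  · obtain ⟨x, hx⟩ := ha.1
    exact left_lt_sup.2 fun h => hy a ha.2 x hx (h hx)

theorem GraphSphere.simplexBoundary {s : Finset V} (hs : s.Nonempty) :
    GraphSphere (s.card - 2 : ℤ) (simplexBoundary s) := by
  classical
  induction s using Finset.strongInduction with
  | H s ih =>
    obtain ⟨a, rfl⟩ | hnt := hs.exists_eq_singleton_or_nontrivial
    · exact (show ((({a} : Finset V).card : ℤ) - 2) = -1 by simp) ▸ .empty _ inferInstance
    have hcard : 1 < s.card := Finset.one_lt_card_iff_nontrivial.2 hnt
    refine .succ _ _ (by omega) (fun ⟨y, hy, hys⟩ => ?_) ?_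
    · have hjoin := (ih y hys hy).graphJoin
        (ih (s \ y) (Finset.sdiff_ssubset hys.subset hy) (Finset.sdiff_nonempty.2 hys.not_subset))
      have hcard' : ((s \ y).card : ℤ) = s.card - y.card := by
        rw [Finset.card_sdiff_of_subset hys.subset, Nat.cast_sub (Finset.card_le_card hys.subset)]
      rw [hcard', show (y.card - 2 : ℤ) + (s.card - y.card - 2) + 1 = s.card - 2 - 1 by ring]
        at hjoin
      refine hjoin.of_iso ((graphJoinCongr (inclusionGraphCongr fun z => ?_)
        (simplexBoundarySdiffIso hys.subset)).trans
          (inclusionGraphUnitSphereIso _ ⟨y, hy, hys⟩).symm)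
      exact ⟨fun h => ⟨⟨h.1, h.2.trans hys⟩, h.2⟩, fun h => ⟨h.1.1, h.2⟩⟩
    · obtain ⟨a, ha⟩ := hs
      refine ⟨⟨{a}, Finset.singleton_nonempty a, Finset.ssubset_iff_subset_ne.2
        ⟨Finset.singleton_subset_iff.2 ha, hnt.ne_singleton.symm⟩⟩, ?_⟩
      refine (GraphContractible.inclusionGraph_ssubset_ne_singleton ha hnt.ne_singleton).of_iso
        ((inclusionGraphDeleteVertIso _ _).trans (inclusionGraphCongr fun z => ?_)).symm
      exact and_assoc

end SimplexBoundary

namespace SimpleGraph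

variable {V : Type u} (G : SimpleGraph V)

abbrev barycentricRefinement :
    SimpleGraph {z : Finset V // z.Nonempty ∧ G.IsClique (↑z : Set V)} :=
  inclusionGraph fun z : Finset V => z.Nonempty ∧ G.IsClique (↑z : Set V)

abbrev cliquesAbove (x : Finset V) :
    SimpleGraph {z : Finset V // G.IsClique (↑z : Set V) ∧ x ⊂ z} :=
  inclusionGraph fun z : Finset V => G.IsClique (↑z : Set V) ∧ x ⊂ z

abbrev singletonClique (v : V) : {z : Finset V // z.Nonempty ∧ G.IsClique (↑z : Set V)} :=
  ⟨{v}, Finset.singleton_nonempty v, by simp⟩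

def insertApex (v : V) (x : Finset {u // G.Adj v u}) : Finset V :=
  (x.map (Function.Embedding.subtype _)).cons v
    (Finset.notMem_map_subtype_of_not_property x (G.irrefl))

variable {G} {v : V}

theorem insertApex_subset_insertApex {x y : Finset {u // G.Adj v u}} :
    G.insertApex v x ⊆ G.insertApex v y ↔ x ⊆ y :=
  Finset.cons_subset_cons.trans Finset.map_subset_map

theorem insertApex_ssubset_insertApex {x y : Finset {u // G.Adj v u}} :
    G.insertApex v x ⊂ G.insertApex v y ↔ x ⊂ y := by
  simp only [ssubset_iff_subset_not_subset, insertApex_subset_insertApex]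

theorem card_insertApex (x : Finset {u // G.Adj v u}) :
    (G.insertApex v x).card = x.card + 1 := by
  simp [insertApex]

theorem isClique_insertApex_iff {x : Finset {u // G.Adj v u}} :
    G.IsClique (↑(G.insertApex v x) : Set V) ↔ (G.unitSphere v).IsClique (↑x : Set _) := by
  simp only [insertApex, Finset.coe_cons, Finset.coe_map, Function.Embedding.coe_subtype,
    isClique_insert, unitSphere]
  refine (and_iff_left ?_).trans isClique_induce_iff.symm
  rintro _ ⟨b, _, rfl⟩ _
  exact b.2

theorem exists_insertApex_eq {z : Finset V} (hv : v ∈ z) (hz : G.IsClique (↑z : Set V)) :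
    ∃ x, G.insertApex v x = z := by
  classical
  refine ⟨(z.erase v).subtype (G.Adj v), ?_⟩
  rw [insertApex, Finset.cons_eq_insert, Finset.subtype_map_of_mem, Finset.insert_erase hv]
  exact fun u hu => hz hv (Finset.mem_of_mem_erase hu) (Finset.ne_of_mem_erase hu).symm

variable (G)

noncomputable def barycentricRefinementUnitSphereIso
    (x : {z : Finset V // z.Nonempty ∧ G.IsClique (↑z : Set V)}) :
    G.barycentricRefinement.unitSphere x ≃g
      graphJoin (simplexBoundary x.1) (G.cliquesAbove x.1) :=
  (inclusionGraphUnitSphereIso _ x).trans (graphJoinCongr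
    (inclusionGraphCongr fun _ => ⟨fun h => ⟨h.1.1, h.2⟩,
      fun h => ⟨⟨h.1, x.2.2.subset (Finset.coe_subset.2 h.2.subset)⟩, h.2⟩⟩)
    (inclusionGraphCongr fun _ => ⟨fun h => ⟨h.1.2, h.2⟩,
      fun h => ⟨⟨x.2.1.mono h.2.subset, h.1⟩, h.2⟩⟩))

def cliquesAboveEmptyIso : G.cliquesAbove ∅ ≃g G.barycentricRefinement :=
  inclusionGraphCongr fun _ => by rw [Finset.empty_ssubset, and_comm]

noncomputable def cliquesAboveInsertApexIso (v : V) (x : Finset {u // G.Adj v u}) :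
    (G.unitSphere v).cliquesAbove x ≃g G.cliquesAbove (G.insertApex v x) :=
  inclusionGraphIso (G.insertApex v) (fun _ _ _ _ => insertApex_subset_insertApex)
    (fun _ ha => ⟨isClique_insertApex_iff.2 ha.1, insertApex_ssubset_insertApex.2 ha.2⟩)
    (fun b hb => by
      obtain ⟨a, rfl⟩ := exists_insertApex_eq (hb.2.subset (Finset.mem_cons_self _ _)) hb.1
      exact ⟨a, ⟨isClique_insertApex_iff.1 hb.1, insertApex_ssubset_insertApex.1 hb.2⟩, rfl⟩)

noncomputable def barycentricRefinementInduceIso (s : Set V) :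
    (G.induce s).barycentricRefinement ≃g
      inclusionGraph fun z : Finset V => (z.Nonempty ∧ G.IsClique (↑z : Set V)) ∧ ↑z ⊆ s :=
  inclusionGraphIso (Finset.map (Function.Embedding.subtype _))
    (fun _ _ _ _ => Finset.map_subset_map)
    (fun a ha => ⟨⟨ha.1.map, by simpa [isClique_induce_iff] using ha.2⟩,
      Finset.map_subtype_subset a⟩)
    (fun b hb => by
      classical
      have hb' := Finset.subtype_map_of_mem (p := (· ∈ s)) fun x hx => hb.2 hx
      refine ⟨b.subtype (· ∈ s), ⟨Finset.map_nonempty.1 (hb' ▸ hb.1.1), ?_⟩, hb'⟩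
      have hclique := hb.1.2
      rw [← hb', Finset.coe_map, Function.Embedding.coe_subtype] at hclique
      exact isClique_induce_iff.2 hclique)

end SimpleGraph

section Refinement

open SimpleGraph

variable {V : Type u} {G : SimpleGraph V}

theorem GraphContractible.barycentricRefinement_deleteVert [Finite V] {v : V}
    (h : GraphContractible (G.deleteVert v).barycentricRefinement) :
    GraphContractible (G.barycentricRefinement.deleteVert (G.singletonClique v)) := by
  classical
  have := Fintype.ofFinite V
  set P : Finset V → Prop := fun z => (z.Nonempty ∧ G.IsClique (↑z : Set V)) ∧ z ≠ {v}
  set R := Finset.univ.filter fun z => P z ∧ v ∈ z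
  have hR : ∀ z, z ∈ R ↔ P z ∧ v ∈ z := by simp [R]
  -- cliques containing `v` are removed by decreasing size, so those still present form a downset
  refine GraphContractible.of_iso (inclusionGraphDeleteVertIso _ _).symm
    (.inclusionGraph_of_peel (P := P) R (fun w hw => ((hR w).1 hw).1)
      (fun T => ∀ w ∈ T, ∀ w' ∈ R, w' ⊆ w → w' ∈ T) (fun _ _ w' hw' _ => hw') ?_ ?_)
  · refine h.of_iso ((G.barycentricRefinementInduceIso _).trans
      (inclusionGraphCongr fun z => ?_))
    have hvz : ↑z ⊆ {u | u ≠ v} ↔ v ∉ z :=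
      ⟨fun h hv => h hv rfl, fun h u hu huv => h (huv ▸ hu)⟩
    rw [hvz, hR]
    exact ⟨fun ⟨hz, hv⟩ => ⟨⟨hz, fun h => hv (h ▸ Finset.mem_singleton_self v)⟩, fun h => hv h.2⟩,
      fun ⟨hz, hzR⟩ => ⟨hz.1, fun hv => hzR ⟨hz, hv⟩⟩⟩
  · intro T hTR hT hne
    obtain ⟨w, hwT, hwmax⟩ := T.exists_max_image Finset.card hne
    obtain ⟨⟨⟨-, hwc⟩, hwv⟩, hvw⟩ := (hR w).1 (hTR hwT)
    refine ⟨w, hwT, fun w₁ hw₁ w' hw' hw'w₁ => Finset.mem_erase.2 ⟨?_, hT w₁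
      (Finset.mem_of_mem_erase hw₁) w' hw' hw'w₁⟩, ?_⟩
    · rintro rfl
      exact Finset.ne_of_mem_erase hw₁ (Finset.eq_of_subset_of_card_le hw'w₁
        (hwmax w₁ (Finset.mem_of_mem_erase hw₁))).symm
    have : IsEmpty {z // (P z ∧ (z ∈ R → z ∈ T)) ∧ w ⊂ z} :=
      ⟨fun ⟨z, ⟨hz, hzT⟩, hwz⟩ => (Finset.card_lt_card hwz).not_ge
        (hwmax z (hzT ((hR z).2 ⟨hz, hwz.subset hvw⟩)))⟩
    refine (GraphContractible.inclusionGraph_ssubset_ne_singleton hvw hwv).of_iso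
      ((inclusionGraphCongr fun z => ?_).trans (graphJoinOfIsEmptyRight _ _).symm)
    exact ⟨fun ⟨hz, hzw, hzv⟩ => ⟨⟨⟨⟨hz, hwc.subset (Finset.coe_subset.2 hzw.subset)⟩, hzv⟩,
      fun hzR => hT w hwT z hzR hzw.subset⟩, hzw⟩,
      fun ⟨⟨⟨⟨hz, _⟩, hzv⟩, _⟩, hzw⟩ => ⟨hz, hzw, hzv⟩⟩

theorem GraphContractible.barycentricRefinement (h : GraphContractible G) :
    GraphContractible G.barycentricRefinement := by
  induction h with
  | @single V G hne hsub =>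
    obtain ⟨v⟩ := hne
    have hv : ∀ z : Finset V, z.Nonempty → z = {v} := fun z ⟨a, ha⟩ =>
      Finset.eq_singleton_iff_unique_mem.2
        ⟨Subsingleton.elim a v ▸ ha, fun c _ => Subsingleton.elim c v⟩
    exact .single _ ⟨G.singletonClique v⟩
      ⟨fun x y => Subtype.ext ((hv _ x.2.1).trans (hv _ y.2.1).symm)⟩
  | @step V G v hS hD ihS ihD =>
    have : Finite V := (GraphContractible.step G v hS hD).finite
    refine .step _ (G.singletonClique v) ?_ ihD.barycentricRefinement_deleteVert
    have hlink : GraphContractible (G.cliquesAbove {v}) := by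
      have := ihS.of_iso ((G.unitSphere v).cliquesAboveEmptyIso.symm.trans
        (G.cliquesAboveInsertApexIso v ∅))
      rwa [show G.insertApex v ∅ = {v} by simp [insertApex]] at this
    exact hlink.of_iso ((graphJoinOfIsEmptyLeft _ _).symm.trans
      (G.barycentricRefinementUnitSphereIso _).symm)

theorem isGraphManifold_barycentricRefinement {q : ℤ}
    (h : ∀ x : Finset V, x.Nonempty → G.IsClique (↑x : Set V) →
      GraphSphere (q - x.card) (G.cliquesAbove x)) :
    IsGraphManifold q G.barycentricRefinement := by
  rintro ⟨x, hne, hx⟩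
  have := (GraphSphere.simplexBoundary hne).graphJoin (h x hne hx)
  rw [show (x.card - 2 : ℤ) + (q - x.card) + 1 = q - 1 by ring] at this
  exact this.of_iso (G.barycentricRefinementUnitSphereIso _).symm

theorem graphSphere_cliquesAbove_of_unitSphere {q : ℤ}
    (h : ∀ v (x : Finset {u // G.Adj v u}), (G.unitSphere v).IsClique (↑x : Set _) →
      GraphSphere (q - 1 - x.card) ((G.unitSphere v).cliquesAbove x))
    {x : Finset V} (hne : x.Nonempty) (hx : G.IsClique (↑x : Set V)) :
    GraphSphere (q - x.card) (G.cliquesAbove x) := by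
  obtain ⟨v, hv⟩ := hne
  obtain ⟨y, rfl⟩ := exists_insertApex_eq hv hx
  rw [card_insertApex, Nat.cast_add, Nat.cast_one, show q - (y.card + 1) = q - 1 - y.card by ring]
  exact (h v y (isClique_insertApex_iff.1 hx)).of_iso (G.cliquesAboveInsertApexIso v y)

theorem GraphSphere.cliquesAbove {q : ℤ} (h : GraphSphere q G) {x : Finset V}
    (hx : G.IsClique (↑x : Set V)) : GraphSphere (q - x.card) (G.cliquesAbove x) := by
  induction h with
  | @empty V G _ =>
    obtain rfl := Finset.eq_empty_of_isEmpty x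
    refine (show (-1 : ℤ) - (∅ : Finset V).card = -1 by simp) ▸ .empty _ ⟨fun z => ?_⟩
    obtain ⟨a, -⟩ := Finset.empty_ssubset.1 z.2.2
    exact isEmptyElim a
  | succ G q hq hS hv ihS =>
    have hU := fun x => graphSphere_cliquesAbove_of_unitSphere (x := x) fun v _ hy => ihS v hy
    rcases x.eq_empty_or_nonempty with rfl | hne
    · obtain ⟨v, hv⟩ := hv
      have := (GraphSphere.succ G q hq hS ⟨v, hv⟩).finite
      have hsphere : GraphSphere q G.barycentricRefinement := .succ _ q hq
        (isGraphManifold_barycentricRefinement hU)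
        ⟨G.singletonClique v, hv.barycentricRefinement.barycentricRefinement_deleteVert⟩
      simpa using hsphere.of_iso G.cliquesAboveEmptyIso.symm
    · exact hU x hne hx

end Refinement

theorem barycentric_refinement_manifold_general {V : Type} (G : SimpleGraph V)
    (q : ℕ) (hG : IsGraphManifold (q : ℤ) G) :
    IsGraphManifold (q : ℤ)
      (SimpleGraph.fromRel
        (fun x y : {x : Finset V // x.Nonempty ∧ G.IsClique (↑x : Set V)} =>
          x.1 ⊂ y.1)) := by
  rw [fromRel_ssubset_eq_inclusionGraph]
  exact isGraphManifold_barycentricRefinement fun x hne hx =>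
    graphSphere_cliquesAbove_of_unitSphere (fun v _ hy => (hG v).cliquesAbove hy) hne hx

/-- The Barycentric refinement of a `q`-manifold — the graph whose vertices are the
nonempty cliques of `G`, two cliques being adjacent iff one is strictly contained in
the other — is again a `q`-manifold. -/
theorem barycentric_refinement_manifold {V : Type} [Fintype V] (G : SimpleGraph V)
    (q : ℕ) (hG : IsGraphManifold (q : ℤ) G) :
    IsGraphManifold (q : ℤ)
      (SimpleGraph.fromRel
        (fun x y : {x : Finset V // x.Nonempty ∧ G.IsClique (↑x : Set V)} =>
          x.1 ⊂ y.1)) :=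
  barycentric_refinement_manifold_general G q hG
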